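/- Fix q ≥ 1. There exists a constant C > 0 such that for all n ≥ 2, the diffusion state distance on the path P_n between the endpoints 1 and n satisfies |DSD_q(1,n) − (1+q)^{−1/q} n^{1+1/q}| ≤ C · n^{1/q}. -/

import Mathlib

instance pathGraphAdjDecidable (n : ℕ) : DecidableRel (SimpleGraph.pathGraph n).Adj :=
  fun _ _ => decidable_of_iff _ SimpleGraph.pathGraph_adj.symm

/-!
Let `f` be the difference of the rows of `𝔾` at the two endpoints, so that
`f (I - D⁻¹A) = 𝟙_1 - 𝟙_n`. Writing `f = d h`, this says that `h` has constant discrete derivative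
`-1` along the path, and `∑ f = 0` centres it: `f_j = d_j ((n-1)/2 - j)`. Up to the two endpoint
terms, `DSD_q(1,n)^q` is therefore `∑_j |2j - (n-1)|^q`, a midpoint Riemann sum for
`∫_{-n/2}^{n/2} |2x|^q dx = n^{q+1}/(q+1) =: B`, with error `O(n^q)`. Taking `q`-th roots multiplies
this error by at most `B^{1/q-1}` (concavity of `x ↦ x^{1/q}`), which turns it into `O(n^{1/q})`.
-/

open Real Finset Matrix MeasureTheory

theorem Matrix.vecMul_one_sub_diagonal_mul {V R : Type*} [Fintype V] [DecidableEq V] [CommRing R]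
    (v w : V → R) (A : Matrix V V R) : v ᵥ* (1 - diagonal w * A) = v - (v * w) ᵥ* A := by
  rw [vecMul_sub, vecMul_one, ← vecMul_vecMul]
  congr 2
  ext x
  simp [vecMul_diagonal]

theorem Matrix.sub_vecMul_of_mul_eq {V R : Type*} [Fintype V] [DecidableEq V] [CommRing R]
    {𝔾 M : Matrix V V R} {c : V → R} (h : ∀ x y, (𝔾 * M) x y = (if x = y then 1 else 0) - c y)
    (x x' : V) : (𝔾 x - 𝔾 x') ᵥ* M = Pi.single x 1 - Pi.single x' 1 := by
  ext y
  have hx := h x y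
  have hx' := h x' y
  simp only [mul_apply] at hx hx'
  simp only [Pi.sub_apply, vecMul, dotProduct, sub_mul, sum_sub_distrib, hx, hx',
    Pi.single_apply, eq_comm]
  ring

theorem rpow_sub_rpow_le_mul_rpow_sub_one_mul {u v q : ℝ} (hu : 0 ≤ u) (huv : u ≤ v)
    (hq : 1 ≤ q) :
    v ^ q - u ^ q ≤ q * v ^ (q - 1) * (v - u) := by
  rcases huv.eq_or_lt with rfl | hlt
  · simp
  have hv : 0 < v := hu.trans_lt hlt
  -- Bernoulli's inequality: the tangent line of `x ↦ x ^ q` at `v` lies below its graph.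
  have h := one_add_mul_self_le_rpow_one_add (s := u / v - 1)
    (by linarith [div_nonneg hu hv.le]) hq
  rw [add_sub_cancel, div_rpow hu hv.le, le_div_iff₀ (rpow_pos_of_pos hv q)] at h
  rw [rpow_sub_one hv.ne']
  field_simp at h ⊢
  nlinarith [rpow_pos_of_pos hv q]

theorem abs_rpow_sub_rpow_le {u v M q : ℝ} (hu : 0 ≤ u) (hv : 0 ≤ v) (huM : u ≤ M) (hvM : v ≤ M)
    (hq : 1 ≤ q) : |u ^ q - v ^ q| ≤ q * M ^ (q - 1) * |u - v| := by
  wlog huv : u ≤ v generalizing u v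
  · rw [abs_sub_comm, abs_sub_comm u]
    exact this hv hu hvM huM (le_of_not_ge huv)
  rw [abs_sub_comm, abs_of_nonneg (sub_nonneg.2 (rpow_le_rpow hu huv (by linarith))),
    abs_sub_comm, abs_of_nonneg (sub_nonneg.2 huv)]
  calc v ^ q - u ^ q ≤ q * v ^ (q - 1) * (v - u) := rpow_sub_rpow_le_mul_rpow_sub_one_mul hu huv hq
    _ ≤ q * M ^ (q - 1) * (v - u) := by gcongr

theorem abs_rpow_sub_rpow_le_rpow_sub_one_mul {a b r : ℝ} (ha : 0 ≤ a) (hb : 0 < b) (hr0 : 0 ≤ r)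
    (hr1 : r ≤ 1) : |a ^ r - b ^ r| ≤ b ^ (r - 1) * |a - b| := by
  -- `x ↦ x ^ r` moves `x = a / b` towards `1`.
  have key : |(a / b) ^ r - 1| ≤ |a / b - 1| := by
    have hx : 0 ≤ a / b := div_nonneg ha hb.le
    rcases le_total (a / b) 1 with h | h
    · rw [abs_of_nonpos (by linarith [rpow_le_one hx h hr0]), abs_of_nonpos (by linarith)]
      linarith [self_le_rpow_of_le_one hx h hr1]
    · rw [abs_of_nonneg (by linarith [one_le_rpow h hr0]), abs_of_nonneg (by linarith)]
      linarith [rpow_le_self_of_one_le h hr1]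
  have hbr : 0 < b ^ r := rpow_pos_of_pos hb r
  calc |a ^ r - b ^ r| = b ^ r * |(a / b) ^ r - 1| := by
        rw [div_rpow ha hb.le, ← abs_of_pos hbr, ← abs_mul, abs_of_pos hbr, mul_sub,
          mul_div_cancel₀ _ hbr.ne', mul_one]
    _ ≤ b ^ r * |a / b - 1| := by gcongr
    _ = b ^ (r - 1) * |a - b| := by
        rw [rpow_sub_one hb.ne', div_sub_one hb.ne', abs_div, abs_of_pos hb]
        ring

theorem abs_sum_sub_integral_le {F : ℝ → ℝ} {G : ℕ → ℝ} {a L : ℝ} {N : ℕ}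
    (hF : ∀ j < N, IntervalIntegrable F volume (a + j) (a + j + 1))
    (hG : ∀ j < N, ∀ x ∈ Set.Icc (a + j) (a + j + 1), |G j - F x| ≤ L) :
    |∑ j ∈ range N, G j - ∫ x in a..a + N, F x| ≤ N * L := by
  have hsplit : ∫ x in a..a + N, F x = ∑ j ∈ range N, ∫ x in (a + j)..(a + j + 1), F x := by
    have := intervalIntegral.sum_integral_adjacent_intervals (a := fun k : ℕ => a + k) (f := F)
      (μ := volume) (n := N) (fun k hk => by simpa [add_assoc] using hF k hk)
    simpa [add_assoc] using this.symm
  have hpiece : ∀ j < N, |G j - ∫ x in (a + j)..(a + j + 1), F x| ≤ L := by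
    intro j hj
    have hG' : G j - ∫ x in (a + j)..(a + j + 1), F x
        = ∫ x in (a + j)..(a + j + 1), (G j - F x) := by
      rw [intervalIntegral.integral_sub intervalIntegrable_const (hF j hj),
        intervalIntegral.integral_const, add_sub_cancel_left, one_smul]
    rw [hG']
    simpa using intervalIntegral.norm_integral_le_of_norm_le_const (a := a + j) (b := a + j + 1)
      (f := fun x => G j - F x) fun x hx =>
        hG j hj x (Set.Ioc_subset_Icc_self (by simpa using hx))
  calc |∑ j ∈ range N, G j - ∫ x in a..a + N, F x|
      = |∑ j ∈ range N, (G j - ∫ x in (a + j)..(a + j + 1), F x)| := by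
        rw [hsplit, sum_sub_distrib]
    _ ≤ ∑ j ∈ range N, |G j - ∫ x in (a + j)..(a + j + 1), F x| := abs_sum_le_sum_abs _ _
    _ ≤ ∑ _j ∈ range N, L := sum_le_sum fun j hj => hpiece j (mem_range.1 hj)
    _ = N * L := by simp

theorem integral_abs_rpow {c q : ℝ} (hc : 0 ≤ c) (hq : 0 ≤ q) :
    ∫ x in -c..c, |x| ^ q = 2 * c ^ (q + 1) / (q + 1) := by
  have hcont : Continuous fun x : ℝ => |x| ^ q := continuous_abs.rpow_const fun _ => Or.inr hq
  have hpos : ∫ x in (0)..c, |x| ^ q = c ^ (q + 1) / (q + 1) := by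
    rw [intervalIntegral.integral_congr (g := fun x => x ^ q) fun x hx => by
      rw [Set.uIcc_of_le hc] at hx; simp [abs_of_nonneg hx.1]]
    rw [integral_rpow (Or.inl (by linarith)), zero_rpow (by linarith), sub_zero]
  have hneg : ∫ x in -c..0, |x| ^ q = c ^ (q + 1) / (q + 1) := by
    have := intervalIntegral.integral_comp_neg (a := 0) (b := c) fun x : ℝ => |x| ^ q
    simp only [abs_neg, neg_zero] at this
    rw [← this, hpos]
  rw [← intervalIntegral.integral_add_adjacent_intervals (b := 0)
    (hcont.intervalIntegrable _ _) (hcont.intervalIntegrable _ _), hneg, hpos]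
  ring

theorem abs_sum_abs_rpow_sub_le {q : ℝ} (hq : 1 ≤ q) {n : ℕ} (hn : 0 < n) :
    |∑ j ∈ range n, |2 * (j : ℝ) - (n - 1)| ^ q - (n : ℝ) ^ (q + 1) / (q + 1)| ≤ q * n ^ q := by
  have hn' : (0 : ℝ) < n := by exact_mod_cast hn
  have hcont : Continuous fun x : ℝ => |2 * x| ^ q :=
    (continuous_const.mul continuous_id).abs.rpow_const fun _ => Or.inr (by linarith)
  have hint : ∫ x in -(n / 2 : ℝ)..-(n / 2) + n, |2 * x| ^ q = (n : ℝ) ^ (q + 1) / (q + 1) := by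
    rw [intervalIntegral.integral_comp_mul_left (fun x => |x| ^ q) two_ne_zero,
      show 2 * (-(n / 2 : ℝ)) = -n by ring, show 2 * (-(n / 2 : ℝ) + n) = n by ring,
      integral_abs_rpow hn'.le (by linarith), smul_eq_mul]
    ring
  have hbound := abs_sum_sub_integral_le (F := fun x => |2 * x| ^ q)
    (G := fun j : ℕ => |2 * (j : ℝ) - (n - 1)| ^ q) (a := -(n / 2)) (L := q * n ^ (q - 1))
    (fun _ _ => hcont.intervalIntegrable _ _) fun j hj x hx => by
      have hj' : (j : ℝ) + 1 ≤ n := by exact_mod_cast hj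
      obtain ⟨hx₁, hx₂⟩ := hx
      -- `2 * j - (n - 1)` is `2 p` for the midpoint `p` of the `j`-th interval.
      have := abs_rpow_sub_rpow_le (u := |2 * (j : ℝ) - (n - 1)|) (v := |2 * x|) (M := n)
        (abs_nonneg _) (abs_nonneg _) (abs_le.2 ⟨by linarith, by linarith⟩)
        (abs_le.2 ⟨by linarith, by linarith⟩) hq
      refine this.trans (mul_le_of_le_one_right (by positivity) ?_)
      refine (abs_abs_sub_abs_le_abs_sub _ _).trans (abs_le.2 ⟨by linarith, by linarith⟩)
  rw [hint] at hbound
  calc _ ≤ (n : ℝ) * (q * n ^ (q - 1)) := hbound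
    _ = q * n ^ q := by rw [rpow_sub_one hn'.ne']; field_simp

theorem abs_rpow_one_div_sub_le {q K S n : ℝ} (hq : 1 ≤ q) (hn : 0 < n) (hS : 0 ≤ S)
    (h : |S - n ^ (q + 1) / (q + 1)| ≤ K * n ^ q) :
    |S ^ (1 / q) - (1 + q) ^ (-(1 / q)) * n ^ (1 + 1 / q)|
      ≤ (q + 1) ^ (1 - 1 / q) * K * n ^ (1 / q) := by
  have hq0 : 0 < q := by linarith
  have hB : 0 < n ^ (q + 1) / (q + 1) := by positivity
  have hpow : ∀ s, (n ^ (q + 1) / (q + 1)) ^ s = (q + 1) ^ (-s) * n ^ ((q + 1) * s) := by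
    intro s
    rw [div_rpow (by positivity) (by linarith), ← rpow_mul hn.le, rpow_neg (by linarith),
      div_eq_mul_inv, mul_comm]
  have hroot := abs_rpow_sub_rpow_le_rpow_sub_one_mul hS hB (by positivity)
    (div_le_one_of_le₀ hq hq0.le)
  rw [hpow, hpow, show (q + 1) * (1 / q) = 1 + 1 / q by field_simp, neg_sub] at hroot
  rw [add_comm 1 q]
  refine hroot.trans ?_
  calc (q + 1) ^ (1 - 1 / q) * n ^ ((q + 1) * (1 / q - 1)) * |S - n ^ (q + 1) / (q + 1)|
      ≤ (q + 1) ^ (1 - 1 / q) * n ^ ((q + 1) * (1 / q - 1)) * (K * n ^ q) := by gcongr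
    _ = (q + 1) ^ (1 - 1 / q) * K * (n ^ ((q + 1) * (1 / q - 1)) * n ^ q) := by ring
    _ = (q + 1) ^ (1 - 1 / q) * K * n ^ (1 / q) := by
      rw [← rpow_add hn]; congr 2; field_simp; ring

namespace SimpleGraph

variable {n : ℕ}

theorem pathGraph_vecMul_adjMatrix_apply (v : Fin n → ℝ) (y : Fin n) :
    (v ᵥ* (pathGraph n).adjMatrix ℝ) y
      = ∑ k : Fin n, if (k : ℕ) + 1 = y ∨ (y : ℕ) + 1 = k then v k else 0 := by
  simp [vecMul, dotProduct, adjMatrix_apply, pathGraph_adj]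

theorem pathGraph_vecMul_adjMatrix_apply_zero (v : Fin n → ℝ) (h : 1 < n) :
    (v ᵥ* (pathGraph n).adjMatrix ℝ) ⟨0, by omega⟩ = v ⟨1, h⟩ := by
  rw [pathGraph_vecMul_adjMatrix_apply, Fintype.sum_eq_single ⟨1, h⟩ fun k hk => ?_, if_pos]
  · simp
  · rw [if_neg]
    simp only [ne_eq, Fin.ext_iff] at hk
    dsimp only
    omega

theorem pathGraph_vecMul_adjMatrix_apply_succ (v : Fin n → ℝ) {t : ℕ} (h : t + 2 < n) :
    (v ᵥ* (pathGraph n).adjMatrix ℝ) ⟨t + 1, by omega⟩ = v ⟨t, by omega⟩ + v ⟨t + 2, h⟩ := by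
  rw [pathGraph_vecMul_adjMatrix_apply,
    Fintype.sum_eq_add ⟨t, by omega⟩ ⟨t + 2, h⟩ (by simp [Fin.ext_iff]) fun k hk => ?_,
    if_pos, if_pos]
  · simp
  · simp
  · rw [if_neg]
    simp only [ne_eq, Fin.ext_iff] at hk
    dsimp only
    omega

theorem pathGraph_eq_sub_of_vecMul_adjMatrix_eq (hn : 1 < n) {d h : Fin n → ℝ}
    (hd : ∀ i, d i = if (i : ℕ) = 0 ∨ (i : ℕ) = n - 1 then 1 else 2)
    (heq : d * h - h ᵥ* (pathGraph n).adjMatrix ℝ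
      = Pi.single ⟨0, by omega⟩ 1 - Pi.single ⟨n - 1, by omega⟩ 1)
    (j : Fin n) : h j = h ⟨0, by omega⟩ - j := by
  have hstep : ∀ t (ht : t + 1 < n), h ⟨t + 1, ht⟩ = h ⟨t, by omega⟩ - 1 := by
    intro t ht
    induction t with
    | zero =>
      have h0 := congrFun heq ⟨0, by omega⟩
      rw [Pi.sub_apply, Pi.mul_apply, pathGraph_vecMul_adjMatrix_apply_zero _ ht, hd,
        if_pos (Or.inl rfl), Pi.sub_apply, Pi.single_eq_same,
        Pi.single_eq_of_ne (by simp [Fin.ext_iff]; omega)] at h0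
      linarith
    | succ t ih =>
      have ht' := congrFun heq ⟨t + 1, by omega⟩
      rw [Pi.sub_apply, Pi.mul_apply, pathGraph_vecMul_adjMatrix_apply_succ _ ht, hd,
        if_neg (by dsimp only; omega), Pi.sub_apply, Pi.single_eq_of_ne (by simp [Fin.ext_iff]),
        Pi.single_eq_of_ne (by simp [Fin.ext_iff]; omega)] at ht'
      linarith [ih (by omega)]
  obtain ⟨j, hj⟩ := j
  induction j with
  | zero => simp
  | succ j ih => rw [hstep j hj, ih (by omega)]; push_cast; ring

theorem sum_pathGraph_degree_mul_sub (hn : 1 < n) {d : Fin n → ℝ}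
    (hd : ∀ i, d i = if (i : ℕ) = 0 ∨ (i : ℕ) = n - 1 then 1 else 2) (c : ℝ) :
    ∑ j : Fin n, d j * (c - j) = (n - 1) * (2 * c - (n - 1)) := by
  have hgauss : ∑ j : Fin n, (j : ℝ) = n * (n - 1) / 2 := by
    have h := congrArg (Nat.cast : ℕ → ℝ) (sum_range_id_mul_two n)
    push_cast [Nat.cast_sub (by omega : 1 ≤ n)] at h
    rw [Fin.sum_univ_eq_sum_range (fun j => (j : ℝ))]
    linarith
  -- `d` differs from the constant `2` only at the two endpoints.
  have hends : ∑ j : Fin n, (2 - d j) * (c - j) = c + (c - (n - 1)) := by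
    rw [Fintype.sum_eq_add ⟨0, by omega⟩ ⟨n - 1, by omega⟩ (by simp [Fin.ext_iff]; omega)
      fun k hk => ?_, hd, hd, if_pos (Or.inl rfl), if_pos (Or.inr rfl)]
    · push_cast [Nat.cast_sub (by omega : 1 ≤ n)]
      ring
    · simp only [ne_eq, Fin.ext_iff] at hk
      rw [hd, if_neg (by omega), sub_self, zero_mul]
  have hsplit : ∑ j : Fin n, d j * (c - j)
      = ∑ j : Fin n, 2 * (c - j) - ∑ j : Fin n, (2 - d j) * (c - j) := by
    rw [← sum_sub_distrib]; congr 1; ext j; ring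
  rw [hsplit, hends, ← mul_sum, sum_sub_distrib, hgauss, sum_const, card_univ, Fintype.card_fin,
    nsmul_eq_mul]
  ring

theorem pathGraph_green_sub_rows (hn : 1 < n) {d c : Fin n → ℝ}
    (hd : ∀ i, d i = if (i : ℕ) = 0 ∨ (i : ℕ) = n - 1 then 1 else 2)
    {𝔾 : Matrix (Fin n) (Fin n) ℝ}
    (hG : ∀ x y, (𝔾 * (1 - (diagonal fun i => (d i)⁻¹) * (pathGraph n).adjMatrix ℝ)) x y
      = (if x = y then 1 else 0) - c y)
    (hrow : ∀ x, ∑ y, 𝔾 x y = 0) (j : Fin n) :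
    𝔾 ⟨0, by omega⟩ j - 𝔾 ⟨n - 1, by omega⟩ j = d j * ((n - 1) / 2 - j) := by
  set f := 𝔾 ⟨0, by omega⟩ - 𝔾 ⟨n - 1, by omega⟩ with hf_def
  set h := f * fun i => (d i)⁻¹ with hh_def
  have hfh : f = d * h := by
    ext i
    have : d i ≠ 0 := by rw [hd i]; split_ifs <;> norm_num
    rw [Pi.mul_apply, hh_def, Pi.mul_apply]
    field_simp
  have hlin : ∀ j, h j = h ⟨0, by omega⟩ - j := by
    refine pathGraph_eq_sub_of_vecMul_adjMatrix_eq hn hd ?_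
    rw [← hfh, hh_def, ← vecMul_one_sub_diagonal_mul]
    exact sub_vecMul_of_mul_eq hG _ _
  have hcenter : h ⟨0, by omega⟩ = (n - 1) / 2 := by
    have hsum : ((n : ℝ) - 1) * (2 * h ⟨0, by omega⟩ - (n - 1)) = 0 := by
      rw [← sum_pathGraph_degree_mul_sub hn hd]
      calc ∑ j, d j * (h ⟨0, by omega⟩ - j) = ∑ j, f j :=
            sum_congr rfl fun j _ => by rw [hfh, Pi.mul_apply, ← hlin]
        _ = 0 := by simp only [hf_def, Pi.sub_apply, sum_sub_distrib, hrow, sub_self]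
    have hn1 : (n : ℝ) - 1 ≠ 0 := by
      have : (2 : ℝ) ≤ n := by exact_mod_cast hn
      linarith
    linarith [(mul_eq_zero.1 hsum).resolve_left hn1]
  change f j = _
  rw [hfh, Pi.mul_apply, hlin, hcenter]

theorem abs_sum_pathGraph_degree_rpow_sub_le (hn : 1 < n) {d : Fin n → ℝ}
    (hd : ∀ i, d i = if (i : ℕ) = 0 ∨ (i : ℕ) = n - 1 then 1 else 2) {q : ℝ} (hq : 0 ≤ q) :
    |∑ j : Fin n, |d j * ((n - 1) / 2 - j)| ^ q - ∑ j ∈ range n, |2 * (j : ℝ) - (n - 1)| ^ q|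
      ≤ 2 * n ^ q := by
  have hj : ∀ j : Fin n, 0 ≤ (j : ℝ) ∧ (j : ℝ) ≤ n - 1 := fun j =>
    ⟨j.val.cast_nonneg, by rw [le_sub_iff_add_le]; exact_mod_cast j.isLt⟩
  have hbound : ∀ j : Fin n,
      |(|d j * ((n - 1) / 2 - j)| ^ q - |2 * (j : ℝ) - (n - 1)| ^ q)| ≤ n ^ q := by
    intro j
    obtain ⟨hj₀, hj₁⟩ := hj j
    have hdj : 0 < d j ∧ d j ≤ 2 := by rw [hd j]; split_ifs <;> norm_num
    have h₁ : |d j * ((n - 1) / 2 - j)| ≤ n := by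
      rw [abs_mul, abs_of_pos hdj.1]
      have := abs_le.2 (⟨by linarith, by linarith⟩ : -((n - 1) / 2) ≤ (n - 1) / 2 - (j : ℝ) ∧ _)
      nlinarith
    have h₂ : |2 * (j : ℝ) - (n - 1)| ≤ n := abs_le.2 ⟨by linarith, by linarith⟩
    exact abs_sub_le_of_nonneg_of_le (by positivity) (rpow_le_rpow (abs_nonneg _) h₁ hq)
      (by positivity) (rpow_le_rpow (abs_nonneg _) h₂ hq)
  rw [← Fin.sum_univ_eq_sum_range (fun j => |2 * (j : ℝ) - (n - 1)| ^ q), ← sum_sub_distrib,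
    Fintype.sum_eq_add ⟨0, by omega⟩ ⟨n - 1, by omega⟩ (by simp [Fin.ext_iff]; omega)
      fun k hk => ?_]
  · exact (abs_add_le _ _).trans (by linarith [hbound ⟨0, by omega⟩, hbound ⟨n - 1, by omega⟩])
  · simp only [ne_eq, Fin.ext_iff] at hk
    rw [hd, if_neg (by omega), show (2 : ℝ) * ((n - 1) / 2 - k) = -(2 * k - (n - 1)) by ring,
      abs_neg, sub_self]

end SimpleGraph

/-- Fix `q ≥ 1`. There is a constant `C > 0` such that for all `n ≥ 2`,
the diffusion state distance on the path `P_n` between the endpoints satisfies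
`|DSD_q(1,n) − (1+q)^{−1/q} n^{1+1/q}| ≤ C n^{1/q}`. -/
theorem dsd_path_endpoints_asymptotics
    (q : ℝ) (hq : 1 ≤ q) :
    ∃ C : ℝ, 0 < C ∧
      ∀ (n : ℕ) (hn : 2 ≤ n)
        (d : Fin n → ℝ), (∀ i, d i = if (i : ℕ) = 0 ∨ (i : ℕ) = n - 1 then 1 else 2) →
      ∀ (𝔾 : Matrix (Fin n) (Fin n) ℝ),
        (∀ x y : Fin n,
          (𝔾 * (1 - (Matrix.diagonal fun i => (d i)⁻¹)
              * (SimpleGraph.pathGraph n).adjMatrix ℝ)) x y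
            = (if x = y then (1 : ℝ) else 0) - d y / (2 * ((n : ℝ) - 1))) →
        (∀ x : Fin n, ∑ y, 𝔾 x y = 0) →
        |(∑ j, |𝔾 (⟨0, by omega⟩ : Fin n) j - 𝔾 (⟨n - 1, by omega⟩ : Fin n) j| ^ q) ^ (1 / q)
            - (1 + q) ^ (-(1 / q)) * (n : ℝ) ^ (1 + 1 / q)|
          ≤ C * (n : ℝ) ^ (1 / q) := by
  refine ⟨(q + 1) ^ (1 - 1 / q) * (q + 2), by positivity, fun n hn d hd 𝔾 hG hrow => ?_⟩
  rw [sum_congr rfl fun j _ => by rw [SimpleGraph.pathGraph_green_sub_rows hn hd hG hrow j]]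
  refine abs_rpow_one_div_sub_le hq (by positivity) (by positivity) ?_
  have hends := SimpleGraph.abs_sum_pathGraph_degree_rpow_sub_le hn hd (by linarith : 0 ≤ q)
  have hriemann := abs_sum_abs_rpow_sub_le hq (n := n) (by omega)
  calc _ ≤ 2 * (n : ℝ) ^ q + q * n ^ q := (abs_sub_le _ _ _).trans (add_le_add hends hriemann)
    _ = (q + 2) * n ^ q := by ring
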